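/- Let Λ ⊂ Z^d be a finite hypercube with periodic boundary conditions, and let P_Λ^per be the associated PCA transition probability. Then the measure ν_Λ^per(σ) = (W_Λ^per)^{-1} ∏_{i∈Λ} cosh(β Σ_{j∈Z^d} k(i−j) σ̃_j + βh) e^{βhσ_i}, where σ̃ denotes the periodic continuation of σ and W_Λ^per the normalization, is the unique stationary measure for P_Λ^per and is reversible for P_Λ^per; moreover ν_Λ^per coincides with the finite-volume Gibbs measure μ_Λ^per with periodic boundary conditions for the potential Φ given by Φ_{{i}}(σ) = −βhσ_i, Φ_{U_i}(σ) = −log cosh(β Σ_j k(i−j)σ_j + βh) with U_i = {j : k(i−j) ≠ 0}, and Φ_A = 0 for all other finite A. -/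

import Mathlib

/-!
With `A_i(η) = β Σ_j k(i-j) η̃_j + βh`, the update probability is
`p_i(s|η) = e^{s A_i(η)} / (2 cosh A_i(η))`, so the cosh factors of `ν_Λ^per(η)` cancel and
`P(σ|η) ν(η) ∝ exp(β Σ_{i,j∈Λ} σ_i K(i,j) η_j + βh Σ_i σ_i + βh Σ_i η_i)`, where
`K(i,j) = Σ_{m∈ℤ^d} k(i - j - Lm)` is the interaction folded onto the torus. `K` is symmetric
because `k` is, which gives detailed balance and hence stationarity. All transition
probabilities are positive, which makes the stationary measure unique. The Gibbs weight
`exp(Σ_i (βhσ_i + log cosh A_i(σ)))` is the same product as the weight of `ν_Λ^per`.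
-/

open MeasureTheory Filter

namespace PCA

noncomputable section

/-- Sites of the lattice `ℤ^d`. -/
abbrev Site (d : ℕ) := Fin d → ℤ

/-- Spin configurations on `ℤ^d` with spins in `{-1,1}` encoded by `Bool`. -/
abbrev Conf (d : ℕ) := Site d → Bool

/-- The real value of a spin: `true ↦ 1`, `false ↦ -1`. -/
def val (b : Bool) : ℝ := if b then 1 else -1

/-- Squared Euclidean norm of a site. -/
def normSq {d : ℕ} (i : Site d) : ℤ := ∑ t, (i t) ^ 2

/-- The local field `Σ_j k(i-j) η_j`. -/
def field {d : ℕ} (k : Site d → ℝ) (i : Site d) (η : Conf d) : ℝ :=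
  ∑' j : Site d, k (i - j) * val (η j)

/-- Single site updating probability
`p_i(s|η) = (1 + s tanh(β Σ_j k(i-j) η_j + β h))/2`. -/
def pval {d : ℕ} (β h : ℝ) (k : Site d → ℝ) (i : Site d) (s : Bool) (η : Conf d) : ℝ :=
  (1 + val s * Real.tanh (β * field k i η + β * h)) / 2

/-- The configuration equal to `a` on `Λ` and to `τ` outside `Λ`. -/
def fill {d : ℕ} (Λ : Finset (Site d)) (a : ↥Λ → Bool) (τ : Conf d) : Conf d :=
  fun j => if h : j ∈ Λ then a ⟨j, h⟩ else τ j

/-- Finite volume PCA transition probability with boundary condition `τ`: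
`P_Λ^τ(σ|η) = ∏_{i ∈ Λ} p_i(σ_i | η_Λ τ_{Λ^c})`. -/
def Pfin {d : ℕ} (β h : ℝ) (k : Site d → ℝ) (Λ : Finset (Site d)) (τ : Conf d)
    (σ η : ↥Λ → Bool) : ℝ :=
  ∏ i : ↥Λ, pval β h k i.1 (σ i) (fill Λ η τ)

/-- The boundary field `Σ_{j ∈ Λ^c} k(i-j) τ_j`. -/
def outField {d : ℕ} (k : Site d → ℝ) (Λ : Finset (Site d)) (τ : Conf d) (i : Site d) : ℝ :=
  ∑' j : Site d, if j ∈ Λ then 0 else k (i - j) * val (τ j)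

/-- Unnormalized stationary measure of the finite volume PCA:
`∏_{i∈Λ} e^{βhσ_i} cosh(β Σ_j k(i-j) σ̃_j + βh) e^{β σ_i Σ_{j∈Λ^c} k(i-j) τ_j}`. -/
def nuNum {d : ℕ} (β h : ℝ) (k : Site d → ℝ) (Λ : Finset (Site d)) (τ : Conf d)
    (σ : ↥Λ → Bool) : ℝ :=
  ∏ i : ↥Λ,
    Real.exp (β * h * val (σ i))
      * Real.cosh (β * field k i.1 (fill Λ σ τ) + β * h)
      * Real.exp (β * val (σ i) * outField k Λ τ i.1)

/-- The normalized stationary measure `ν_Λ^τ`. -/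
def nu {d : ℕ} (β h : ℝ) (k : Site d → ℝ) (Λ : Finset (Site d)) (τ : Conf d)
    (σ : ↥Λ → Bool) : ℝ :=
  nuNum β h k Λ τ σ / ∑ σ' : ↥Λ → Bool, nuNum β h k Λ τ σ'


/-- The hypercube `∏_t [c_t, c_t + L)` in `ℤ^d`. -/
def boxAt {d : ℕ} (c : Site d) (L : ℕ) : Finset (Site d) :=
  Fintype.piFinset fun t => Finset.Ico (c t) (c t + L)

/-- Periodic continuation to `ℤ^d` of a configuration on the hypercube `boxAt c L`. -/
def perfill {d : ℕ} (c : Site d) (L : ℕ) (hL : 0 < L) (σ : ↥(boxAt c L) → Bool) : Conf d :=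
  fun j => σ ⟨fun t => c t + (j t - c t) % (L : ℤ), by
    have hL' : (0 : ℤ) < (L : ℤ) := by exact_mod_cast hL
    simp only [boxAt, Fintype.mem_piFinset, Finset.mem_Ico]
    intro t
    have h1 := Int.emod_nonneg (j t - c t) hL'.ne'
    have h2 := Int.emod_lt_of_pos (j t - c t) hL'
    omega⟩

/-- Finite volume PCA transition probability with periodic boundary conditions on the
hypercube `boxAt c L`. -/
def Pper {d : ℕ} (β h : ℝ) (k : Site d → ℝ) (c : Site d) (L : ℕ) (hL : 0 < L)
    (σ η : ↥(boxAt c L) → Bool) : ℝ :=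
  ∏ i : ↥(boxAt c L), pval β h k i.1 (σ i) (perfill c L hL η)

/-- Unnormalized stationary measure with periodic boundary conditions:
`∏_{i∈Λ} cosh(β Σ_j k(i-j) σ̃_j + βh) e^{βhσ_i}`, `σ̃` the periodic continuation. -/
def nuPerNum {d : ℕ} (β h : ℝ) (k : Site d → ℝ) (c : Site d) (L : ℕ) (hL : 0 < L)
    (σ : ↥(boxAt c L) → Bool) : ℝ :=
  ∏ i : ↥(boxAt c L),
    Real.cosh (β * field k i.1 (perfill c L hL σ) + β * h) * Real.exp (β * h * val (σ i))

/-- The normalized stationary measure `ν_Λ^per`. -/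
def nuPer {d : ℕ} (β h : ℝ) (k : Site d → ℝ) (c : Site d) (L : ℕ) (hL : 0 < L)
    (σ : ↥(boxAt c L) → Bool) : ℝ :=
  nuPerNum β h k c L hL σ / ∑ σ' : ↥(boxAt c L) → Bool, nuPerNum β h k c L hL σ'

/-- Unnormalized finite volume Gibbs measure with periodic boundary conditions for the
potential `Φ_{{i}}(σ) = -βhσ_i`, `Φ_{U_i}(σ) = -log cosh(β Σ_j k(i-j) σ_j + βh)`:
the energy is `Σ_{i∈Λ} (-βhσ_i - log cosh(β Σ_j k(i-j) σ̃_j + βh))` with `σ̃` the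
periodic continuation of `σ`. -/
def gibbsPerNum {d : ℕ} (β h : ℝ) (k : Site d → ℝ) (c : Site d) (L : ℕ) (hL : 0 < L)
    (σ : ↥(boxAt c L) → Bool) : ℝ :=
  Real.exp (-(∑ i : ↥(boxAt c L),
    (-(β * h * val (σ i)) -
      Real.log (Real.cosh (β * field k i.1 (perfill c L hL σ) + β * h)))))

/-- The normalized finite volume Gibbs measure `μ_Λ^per` with periodic boundary conditions. -/
def gibbsPer {d : ℕ} (β h : ℝ) (k : Site d → ℝ) (c : Site d) (L : ℕ) (hL : 0 < L)
    (σ : ↥(boxAt c L) → Bool) : ℝ :=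
  gibbsPerNum β h k c L hL σ / ∑ σ' : ↥(boxAt c L) → Bool, gibbsPerNum β h k c L hL σ'

section MarkovKernel

variable {α : Type*} [Fintype α] {P : α → α → ℝ} {ν : α → ℝ}

theorem stationary_of_detailed_balance (hP : ∀ η, ∑ σ, P σ η = 1)
    (hrev : ∀ σ η, P σ η * ν η = P η σ * ν σ) (σ : α) :
    ∑ η, P σ η * ν η = ν σ := by
  simp_rw [hrev σ, ← Finset.sum_mul, hP, one_mul]

/-- Subtracting from `ν'` the largest multiple `m • ν` below it leaves a nonnegative stationary
vector vanishing somewhere; strict positivity of `P` then forces it to vanish everywhere. -/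
theorem eq_of_stationary_of_pos [Nonempty α] (hP : ∀ σ η, 0 < P σ η)
    (hν : ∀ σ, 0 < ν σ) (hstat : ∀ σ, ∑ η, P σ η * ν η = ν σ) {ν' : α → ℝ}
    (hstat' : ∀ σ, ∑ η, P σ η * ν' η = ν' σ) (hsum : ∑ σ, ν' σ = ∑ σ, ν σ) :
    ν' = ν := by
  obtain ⟨σ₀, -, hmin⟩ :=
    Finset.univ.exists_min_image (fun η => ν' η / ν η) Finset.univ_nonempty
  set m := ν' σ₀ / ν σ₀
  set g := fun η => ν' η - m * ν η
  have hg_nonneg : ∀ η, 0 ≤ g η := fun η => by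
    have := (le_div_iff₀ (hν η)).1 (hmin η (Finset.mem_univ η))
    simp only [g]
    linarith
  have hg₀ : g σ₀ = 0 := by simp only [g, m, div_mul_cancel₀ _ (hν σ₀).ne', sub_self]
  have hg_stat : ∑ η, P σ₀ η * g η = g σ₀ := by
    simp only [g, mul_sub, Finset.sum_sub_distrib, mul_left_comm _ m, ← Finset.mul_sum,
      hstat', hstat]
  have hg : ∀ η, g η = 0 := by
    have hzero := (Finset.sum_eq_zero_iff_of_nonneg fun η _ =>
      mul_nonneg (hP σ₀ η).le (hg_nonneg η)).1 (hg_stat.trans hg₀)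
    exact fun η => (mul_eq_zero.1 (hzero η (Finset.mem_univ η))).resolve_left (hP σ₀ η).ne'
  have hν'_eq : ∀ η, ν' η = m * ν η := fun η => sub_eq_zero.1 (hg η)
  have hm : m = 1 := by
    have hpos : 0 < ∑ σ, ν σ := Finset.sum_pos (fun σ _ => hν σ) Finset.univ_nonempty
    simp only [hν'_eq, ← Finset.mul_sum] at hsum
    exact (mul_eq_right₀ hpos.ne').1 hsum
  funext η
  rw [hν'_eq, hm, one_mul]

end MarkovKernel

theorem one_add_val_mul_tanh_div_two (s : Bool) (x : ℝ) :
    (1 + val s * Real.tanh x) / 2 = Real.exp (val s * x) / (2 * Real.cosh x) := by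
  have hc := (Real.cosh_pos x).ne'
  rw [Real.tanh_eq_sinh_div_cosh]
  cases s
  · simp only [val, Bool.false_eq_true, if_false, neg_one_mul, ← Real.cosh_sub_sinh]
    field_simp
    ring
  · simp only [val, if_true, one_mul, ← Real.cosh_add_sinh]
    field_simp

section Lattice

variable {d : ℕ}

theorem pval_pos (β h : ℝ) (k : Site d → ℝ) (i : Site d) (s : Bool) (η : Conf d) :
    0 < pval β h k i s η := by
  rw [pval, one_add_val_mul_tanh_div_two]
  positivity

theorem pval_true_add_pval_false (β h : ℝ) (k : Site d → ℝ) (i : Site d) (η : Conf d) :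
    pval β h k i true η + pval β h k i false η = 1 := by
  simp only [pval, val, if_true, Bool.false_eq_true, if_false]
  ring

theorem support_finite_of_normSq {k : Site d → ℝ} (R : ℝ)
    (hrange : ∀ i : Site d, R ^ 2 < (normSq i : ℝ) → k i = 0) :
    (Function.support k).Finite := by
  set N : ℤ := (⌈|R|⌉₊ : ℤ)
  refine (Fintype.piFinset fun _ : Fin d => Finset.Icc (-N) N).finite_toSet.subset
    fun i hi => ?_
  simp only [Finset.mem_coe, Fintype.mem_piFinset, Finset.mem_Icc]
  intro t
  have hnorm : (normSq i : ℝ) ≤ R ^ 2 := not_lt.1 fun hlt => hi (hrange i hlt)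
  have hcoord : ((i t : ℝ)) ^ 2 ≤ (normSq i : ℝ) := by
    exact_mod_cast Finset.single_le_sum (f := fun t => i t ^ 2)
      (fun _ _ => sq_nonneg _) (Finset.mem_univ t)
  have habs : |(i t : ℝ)| ≤ N := by
    calc |(i t : ℝ)| ≤ |R| := sq_le_sq.1 (hcoord.trans hnorm)
      _ ≤ N := by simpa [N] using Nat.le_ceil |R|
  exact_mod_cast abs_le.1 habs

theorem mem_boxAt_emod (c : Site d) (L : ℕ) (hL : 0 < L) (j : Site d) :
    (fun t => c t + (j t - c t) % (L : ℤ)) ∈ boxAt c L := by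
  have hL' : (0 : ℤ) < L := by exact_mod_cast hL
  simp only [boxAt, Fintype.mem_piFinset, Finset.mem_Ico]
  intro t
  have h1 := Int.emod_nonneg (j t - c t) hL'.ne'
  have h2 := Int.emod_lt_of_pos (j t - c t) hL'
  omega

def boxEquiv (c : Site d) (L : ℕ) (hL : 0 < L) : ↥(boxAt c L) × Site d ≃ Site d where
  toFun p := p.1.1 + (L : ℤ) • p.2
  invFun j := (⟨fun t => c t + (j t - c t) % (L : ℤ), mem_boxAt_emod c L hL j⟩,
    fun t => (j t - c t) / (L : ℤ))
  left_inv := by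
    rintro ⟨⟨j, hj⟩, m⟩
    have hL' : (0 : ℤ) < L := by exact_mod_cast hL
    simp only [boxAt, Fintype.mem_piFinset, Finset.mem_Ico] at hj
    have hshift : ∀ t, (j + (L : ℤ) • m) t - c t = (j t - c t) + L * m t := fun t => by
      simp only [Pi.add_apply, Pi.smul_apply, smul_eq_mul]
      ring
    refine Prod.ext (Subtype.ext (funext fun t => ?_)) (funext fun t => ?_) <;> have := hj t
    · simp only [hshift, Int.add_mul_emod_self_left,
        Int.emod_eq_of_lt (by omega : 0 ≤ j t - c t) (by omega : j t - c t < L)]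
      omega
    · simp only [hshift, Int.add_mul_ediv_left _ _ hL'.ne',
        Int.ediv_eq_zero_of_lt (by omega : 0 ≤ j t - c t) (by omega : j t - c t < L), zero_add]
  right_inv j := by
    funext t
    have := Int.emod_add_mul_ediv (j t - c t) (L : ℤ)
    simp only [Pi.add_apply, Pi.smul_apply, smul_eq_mul]
    omega

theorem perfill_boxEquiv (c : Site d) (L : ℕ) (hL : 0 < L) (η : ↥(boxAt c L) → Bool)
    (p : ↥(boxAt c L) × Site d) :
    perfill c L hL η (boxEquiv c L hL p) = η p.1 := by
  change η ((boxEquiv c L hL).symm (boxEquiv c L hL p)).1 = η p.1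
  rw [Equiv.symm_apply_apply]

def periodicKernel (k : Site d → ℝ) (L : ℕ) (i j : Site d) : ℝ :=
  ∑' m : Site d, k (i - (j + (L : ℤ) • m))

theorem periodicKernel_comm {k : Site d → ℝ} (hsym : ∀ i, k (-i) = k i) (L : ℕ)
    (i j : Site d) : periodicKernel k L i j = periodicKernel k L j i := by
  rw [periodicKernel, ← (Equiv.neg (Site d)).tsum_eq]
  refine tsum_congr fun m => ?_
  rw [← hsym]
  congr 1
  simp only [Equiv.neg_apply, smul_neg]
  abel

theorem field_perfill {k : Site d → ℝ} (hk : (Function.support k).Finite)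
    (c : Site d) (L : ℕ) (hL : 0 < L) (η : ↥(boxAt c L) → Bool) (i : Site d) :
    field k i (perfill c L hL η)
      = ∑ j : ↥(boxAt c L), periodicKernel k L i j * val (η j) := by
  have hsumm : Summable fun p : ↥(boxAt c L) × Site d =>
      k (i - boxEquiv c L hL p) * val (η p.1) := by
    refine summable_of_hasFiniteSupport ((hk.preimage ?_).subset
      (Function.support_mul_subset_left _ _))
    exact (sub_right_injective.comp (boxEquiv c L hL).injective).injOn
  rw [field, ← (boxEquiv c L hL).tsum_eq]
  simp only [perfill_boxEquiv]
  rw [hsumm.tsum_prod' fun j => hsumm.prod_factor j, tsum_fintype]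
  exact Finset.sum_congr rfl fun j _ => by rw [periodicKernel, ← tsum_mul_right]; rfl

theorem sum_val_mul_field_perfill_comm {k : Site d → ℝ} (hsym : ∀ i, k (-i) = k i)
    (hk : (Function.support k).Finite) (c : Site d) (L : ℕ) (hL : 0 < L)
    (σ η : ↥(boxAt c L) → Bool) :
    ∑ i : ↥(boxAt c L), val (σ i) * field k i (perfill c L hL η)
      = ∑ i : ↥(boxAt c L), val (η i) * field k i (perfill c L hL σ) := by
  simp only [field_perfill hk, Finset.mul_sum]
  rw [Finset.sum_comm]
  refine Finset.sum_congr rfl fun i _ => Finset.sum_congr rfl fun j _ => ?_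
  rw [periodicKernel_comm hsym]
  ring

end Lattice

section Periodic

variable {d : ℕ} (β h : ℝ) (k : Site d → ℝ) (c : Site d) (L : ℕ) (hL : 0 < L)

theorem Pper_pos (σ η : ↥(boxAt c L) → Bool) : 0 < Pper β h k c L hL σ η :=
  Finset.prod_pos fun i _ => pval_pos β h k i.1 (σ i) _

theorem sum_Pper_eq_one (η : ↥(boxAt c L) → Bool) :
    ∑ σ : ↥(boxAt c L) → Bool, Pper β h k c L hL σ η = 1 := by
  simp only [Pper]
  rw [← Fintype.prod_sum fun (i : ↥(boxAt c L)) (s : Bool) =>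
    pval β h k i.1 s (perfill c L hL η)]
  simp only [Fintype.sum_bool, pval_true_add_pval_false, Finset.prod_const_one]

theorem Pper_mul_nuPerNum (σ η : ↥(boxAt c L) → Bool) :
    Pper β h k c L hL σ η * nuPerNum β h k c L hL η
      = Real.exp (β * ∑ i : ↥(boxAt c L), val (σ i) * field k i (perfill c L hL η)
          + β * h * ∑ i : ↥(boxAt c L), val (σ i)
          + β * h * ∑ i : ↥(boxAt c L), val (η i))
        / 2 ^ Fintype.card ↥(boxAt c L) := by
  have hfactor : ∀ i : ↥(boxAt c L),
      pval β h k i (σ i) (perfill c L hL η) *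
        (Real.cosh (β * field k i (perfill c L hL η) + β * h) * Real.exp (β * h * val (η i)))
      = Real.exp (β * (val (σ i) * field k i (perfill c L hL η)) + β * h * val (σ i)
          + β * h * val (η i)) / 2 := fun i => by
    have hc := (Real.cosh_pos (β * field k i (perfill c L hL η) + β * h)).ne'
    rw [pval, one_add_val_mul_tanh_div_two, show β * (val (σ i) * field k i (perfill c L hL η))
      + β * h * val (σ i) + β * h * val (η i)
      = val (σ i) * (β * field k i (perfill c L hL η) + β * h) + β * h * val (η i) by ring,
      Real.exp_add]
    field_simp
  rw [Pper, nuPerNum, ← Finset.prod_mul_distrib, Finset.prod_congr rfl fun i _ => hfactor i,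
    Finset.prod_div_distrib, ← Real.exp_sum, Finset.prod_const, Finset.card_univ,
    Finset.sum_add_distrib, Finset.sum_add_distrib, ← Finset.mul_sum, ← Finset.mul_sum,
    ← Finset.mul_sum]

variable {k}

theorem Pper_mul_nuPerNum_comm (hsym : ∀ i, k (-i) = k i) (hk : (Function.support k).Finite)
    (σ η : ↥(boxAt c L) → Bool) :
    Pper β h k c L hL σ η * nuPerNum β h k c L hL η
      = Pper β h k c L hL η σ * nuPerNum β h k c L hL σ := by
  rw [Pper_mul_nuPerNum, Pper_mul_nuPerNum, sum_val_mul_field_perfill_comm hsym hk]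
  ring_nf

theorem Pper_mul_nuPer_comm (hsym : ∀ i, k (-i) = k i) (hk : (Function.support k).Finite)
    (σ η : ↥(boxAt c L) → Bool) :
    Pper β h k c L hL σ η * nuPer β h k c L hL η
      = Pper β h k c L hL η σ * nuPer β h k c L hL σ := by
  simp only [nuPer, ← mul_div_assoc, Pper_mul_nuPerNum_comm β h c L hL hsym hk σ η]

variable (k)

theorem nuPerNum_pos (σ : ↥(boxAt c L) → Bool) : 0 < nuPerNum β h k c L hL σ :=
  Finset.prod_pos fun _ _ => by positivity

theorem nuPer_pos (σ : ↥(boxAt c L) → Bool) : 0 < nuPer β h k c L hL σ :=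
  div_pos (nuPerNum_pos β h k c L hL σ)
    (Finset.sum_pos (fun σ _ => nuPerNum_pos β h k c L hL σ) Finset.univ_nonempty)

theorem sum_nuPer : ∑ σ : ↥(boxAt c L) → Bool, nuPer β h k c L hL σ = 1 := by
  simp only [nuPer]
  rw [← Finset.sum_div, div_self]
  exact (Finset.sum_pos (fun σ _ => nuPerNum_pos β h k c L hL σ) Finset.univ_nonempty).ne'

theorem nuPerNum_eq_gibbsPerNum : nuPerNum β h k c L hL = gibbsPerNum β h k c L hL := by
  funext σ
  rw [nuPerNum, gibbsPerNum, ← Finset.sum_neg_distrib, Real.exp_sum]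
  refine Finset.prod_congr rfl fun i _ => ?_
  rw [neg_sub, sub_neg_eq_add, Real.exp_add, Real.exp_log (Real.cosh_pos _), mul_comm]

theorem nuPer_eq_gibbsPer : nuPer β h k c L hL = gibbsPer β h k c L hL := by
  funext σ
  rw [nuPer, gibbsPer, nuPerNum_eq_gibbsPerNum]

end Periodic

theorem stmt6_general {d : ℕ} (β h R : ℝ)
    (k : Site d → ℝ) (hsym : ∀ i : Site d, k (-i) = k i)
    (hrange : ∀ i : Site d, R ^ 2 < (normSq i : ℝ) → k i = 0)
    (c : Site d) (L : ℕ) (hL : 0 < L) :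
    (∀ σ : ↥(boxAt c L) → Bool, 0 ≤ nuPer β h k c L hL σ) ∧
    (∑ σ : ↥(boxAt c L) → Bool, nuPer β h k c L hL σ = 1) ∧
    (∀ σ : ↥(boxAt c L) → Bool,
      ∑ η : ↥(boxAt c L) → Bool, Pper β h k c L hL σ η * nuPer β h k c L hL η
        = nuPer β h k c L hL σ) ∧
    (∀ ν' : (↥(boxAt c L) → Bool) → ℝ, (∀ η, 0 ≤ ν' η) →
      (∑ η : ↥(boxAt c L) → Bool, ν' η = 1) →
      (∀ σ : ↥(boxAt c L) → Bool,
        ∑ η : ↥(boxAt c L) → Bool, Pper β h k c L hL σ η * ν' η = ν' σ) →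
      ν' = nuPer β h k c L hL) ∧
    (∀ σ η : ↥(boxAt c L) → Bool,
      Pper β h k c L hL σ η * nuPer β h k c L hL η
        = Pper β h k c L hL η σ * nuPer β h k c L hL σ) ∧
    (∀ σ : ↥(boxAt c L) → Bool, nuPer β h k c L hL σ = gibbsPer β h k c L hL σ) := by
  have hrev := Pper_mul_nuPer_comm β h c L hL hsym (support_finite_of_normSq R hrange)
  have hstat := stationary_of_detailed_balance (sum_Pper_eq_one β h k c L hL) hrev
  refine ⟨fun σ => (nuPer_pos β h k c L hL σ).le, sum_nuPer β h k c L hL, hstat, ?_, hrev,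
    congrFun (nuPer_eq_gibbsPer β h k c L hL)⟩
  intro ν' _ hsum hstat'
  exact eq_of_stationary_of_pos (Pper_pos β h k c L hL) (nuPer_pos β h k c L hL) hstat hstat'
    (hsum.trans (sum_nuPer β h k c L hL).symm)

/-- On a finite hypercube with periodic boundary conditions, `ν_Λ^per` is
the unique stationary probability measure of the PCA `P_Λ^per`, it is reversible for
`P_Λ^per`, and it coincides with the finite volume Gibbs measure `μ_Λ^per` for the natural
potential. -/
theorem stmt6 {d : ℕ} (hd : 0 < d) (β h R : ℝ) (hβ : 0 < β) (hR : 0 < R)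
    (k : Site d → ℝ) (hsym : ∀ i : Site d, k (-i) = k i)
    (hrange : ∀ i : Site d, R ^ 2 < (normSq i : ℝ) → k i = 0)
    (c : Site d) (L : ℕ) (hL : 0 < L) :
    (∀ σ : ↥(boxAt c L) → Bool, 0 ≤ nuPer β h k c L hL σ) ∧
    (∑ σ : ↥(boxAt c L) → Bool, nuPer β h k c L hL σ = 1) ∧
    (∀ σ : ↥(boxAt c L) → Bool,
      ∑ η : ↥(boxAt c L) → Bool, Pper β h k c L hL σ η * nuPer β h k c L hL η
        = nuPer β h k c L hL σ) ∧
    (∀ ν' : (↥(boxAt c L) → Bool) → ℝ, (∀ η, 0 ≤ ν' η) →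
      (∑ η : ↥(boxAt c L) → Bool, ν' η = 1) →
      (∀ σ : ↥(boxAt c L) → Bool,
        ∑ η : ↥(boxAt c L) → Bool, Pper β h k c L hL σ η * ν' η = ν' σ) →
      ν' = nuPer β h k c L hL) ∧
    (∀ σ η : ↥(boxAt c L) → Bool,
      Pper β h k c L hL σ η * nuPer β h k c L hL η
        = Pper β h k c L hL η σ * nuPer β h k c L hL σ) ∧
    (∀ σ : ↥(boxAt c L) → Bool, nuPer β h k c L hL σ = gibbsPer β h k c L hL σ) :=
  stmt6_general β h R k hsym hrange c L hL

end
end PCA
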